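/- The assume-guarantee rule ASym is sound and complete for simulation conformance: for LPTSes L₁, L₂, P, we have L₁ ∥ L₂ ⪯ P if and only if there exists an LPTS A such that L₁ ∥ A ⪯ P and L₂ ⪯ A, where all alphabets are such that the alphabet of A equals that of L₂. -/

import Mathlib

open Finset
open scoped Classical

/-- A discrete probability distribution on a finite set `S`, with rational values. -/
structure PDist (S : Type) [Fintype S] where
  prob : S → ℚ
  nonneg : ∀ s, 0 ≤ prob s
  sum_one : ∑ s, prob s = 1

/-- The product distribution `ν₁ ⊗ ν₂`. -/
def PDist.prod {S₁ S₂ : Type} [Fintype S₁] [Fintype S₂]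
    (ν₁ : PDist S₁) (ν₂ : PDist S₂) : PDist (S₁ × S₂) where
  prob := fun p => ν₁.prob p.1 * ν₂.prob p.2
  nonneg := fun p => mul_nonneg (ν₁.nonneg _) (ν₂.nonneg _)
  sum_one := by
    rw [Fintype.sum_prod_type]
    simp_rw [← Finset.mul_sum]
    simp [ν₂.sum_one, ν₁.sum_one]

/-- The Dirac distribution on `s`. -/
noncomputable def PDist.dirac {S : Type} [Fintype S] (s : S) : PDist S where
  prob := fun t => if t = s then 1 else 0
  nonneg := by intro t; (try simp only []); split <;> norm_num
  sum_one := by simp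

/-- The lifting `μ₁ ⊑_R μ₂` of a relation `R` to distributions, via a weight function. -/
def DistLe {S₁ S₂ : Type} [Fintype S₁] [Fintype S₂]
    (R : S₁ → S₂ → Prop) (μ₁ : PDist S₁) (μ₂ : PDist S₂) : Prop :=
  ∃ w : S₁ → S₂ → ℚ,
    (∀ s₁ s₂, 0 ≤ w s₁ s₂ ∧ w s₁ s₂ ≤ 1) ∧
    (∀ s₁, μ₁.prob s₁ = ∑ s₂, w s₁ s₂) ∧
    (∀ s₂, μ₂.prob s₂ = ∑ s₁, w s₁ s₂) ∧
    (∀ s₁ s₂, 0 < w s₁ s₂ → R s₁ s₂)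

/-- A labeled probabilistic transition system over states `S`, with an explicit
alphabet `alpha ⊆ A`. -/
structure LPTS (S A : Type) [Fintype S] where
  start : S
  alpha : Set A
  trans : S → A → PDist S → Prop

/-- `R` is a strong simulation between `L₁` and `L₂`. -/
def IsStrongSim {S₁ S₂ A : Type} [Fintype S₁] [Fintype S₂]
    (L₁ : LPTS S₁ A) (L₂ : LPTS S₂ A) (R : S₁ → S₂ → Prop) : Prop :=
  ∀ s₁ s₂, R s₁ s₂ → ∀ a μ₁, L₁.trans s₁ a μ₁ →
    ∃ μ₂, L₂.trans s₂ a μ₂ ∧ DistLe R μ₁ μ₂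

/-- `L₁ ⪯ L₂`: simulation conformance. -/
def Sim {S₁ S₂ A : Type} [Fintype S₁] [Fintype S₂]
    (L₁ : LPTS S₁ A) (L₂ : LPTS S₂ A) : Prop :=
  ∃ R, IsStrongSim L₁ L₂ R ∧ R L₁.start L₂.start

/-- Parallel composition `L₁ ∥ L₂`: synchronization on shared actions via product
distributions, interleaving (with a Dirac distribution on the idle component) on
non-shared actions. -/
noncomputable def parComp {S₁ S₂ A : Type} [Fintype S₁] [Fintype S₂]
    (L₁ : LPTS S₁ A) (L₂ : LPTS S₂ A) : LPTS (S₁ × S₂) A where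
  start := (L₁.start, L₂.start)
  alpha := L₁.alpha ∪ L₂.alpha
  trans := fun p a μ =>
    (∃ μ₁ μ₂, L₁.trans p.1 a μ₁ ∧ L₂.trans p.2 a μ₂ ∧ μ = μ₁.prod μ₂) ∨
    (∃ μ₁, L₁.trans p.1 a μ₁ ∧ a ∉ L₂.alpha ∧ μ = μ₁.prod (PDist.dirac p.2)) ∨
    (∃ μ₂, a ∉ L₁.alpha ∧ L₂.trans p.2 a μ₂ ∧ μ = (PDist.dirac p.1).prod μ₂)

/-! Completeness: take `A = L₂`. Soundness: with the alphabet unchanged, `L₂ ⪯ A` lifts to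
`L₁ ∥ L₂ ⪯ L₁ ∥ A` through the relation `id × R`, since the lifting `⊑_R` is compatible with
products and Dirac distributions; then compose with `L₁ ∥ A ⪯ P`. Transitivity of `⪯` comes
from gluing two weight functions along their common marginal. -/

lemma PDist.prob_le_one {S : Type} [Fintype S] (μ : PDist S) (s : S) : μ.prob s ≤ 1 :=
  μ.sum_one ▸ Finset.single_le_sum (fun t _ => μ.nonneg t) (Finset.mem_univ s)

lemma PDist.eq_of_dirac_prob_pos {S : Type} [Fintype S] {s t : S}
    (h : 0 < (PDist.dirac s).prob t) : t = s := by
  by_contra hts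
  simp [PDist.dirac, hts] at h

namespace DistLe

variable {S₁ S₂ S₃ : Type} [Fintype S₁] [Fintype S₂] [Fintype S₃]

lemma refl (μ : PDist S₁) : DistLe Eq μ μ := by
  refine ⟨fun s t => if s = t then μ.prob s else 0, fun s t => ?_, fun s => ?_, fun t => ?_,
    fun s t hw => ?_⟩
  · dsimp only
    split_ifs
    exacts [⟨μ.nonneg s, μ.prob_le_one s⟩, ⟨le_rfl, zero_le_one⟩]
  · simp
  · simp [Finset.sum_ite_eq']
  · by_contra hst
    simp [hst] at hw

lemma of_forall_prob_pos {R : S₁ → S₂ → Prop} {μ : PDist S₁} {ν : PDist S₂}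
    (hR : ∀ s t, 0 < μ.prob s → 0 < ν.prob t → R s t) : DistLe R μ ν := by
  refine ⟨fun s t => (μ.prod ν).prob (s, t), fun s t => ⟨(μ.prod ν).nonneg _,
    (μ.prod ν).prob_le_one _⟩, fun s => ?_, fun t => ?_, fun s t hw => ?_⟩
  · simp [PDist.prod, ← Finset.mul_sum, ν.sum_one]
  · simp [PDist.prod, ← Finset.sum_mul, μ.sum_one]
  · exact hR s t (pos_of_mul_pos_left hw (ν.nonneg t)) (pos_of_mul_pos_right hw (μ.nonneg s))

lemma dirac {R : S₁ → S₂ → Prop} {s : S₁} {t : S₂} (h : R s t) :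
    DistLe R (PDist.dirac s) (PDist.dirac t) :=
  of_forall_prob_pos fun _ _ hs ht =>
    PDist.eq_of_dirac_prob_pos hs ▸ PDist.eq_of_dirac_prob_pos ht ▸ h

lemma prod {T₁ T₂ : Type} [Fintype T₁] [Fintype T₂]
    {R₁ : S₁ → T₁ → Prop} {R₂ : S₂ → T₂ → Prop}
    {μ₁ : PDist S₁} {ν₁ : PDist T₁} {μ₂ : PDist S₂} {ν₂ : PDist T₂}
    (h₁ : DistLe R₁ μ₁ ν₁) (h₂ : DistLe R₂ μ₂ ν₂) :
    DistLe (fun p q => R₁ p.1 q.1 ∧ R₂ p.2 q.2) (μ₁.prod μ₂) (ν₁.prod ν₂) := by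
  obtain ⟨w₁, hb₁, hl₁, hr₁, hp₁⟩ := h₁
  obtain ⟨w₂, hb₂, hl₂, hr₂, hp₂⟩ := h₂
  refine ⟨fun p q => w₁ p.1 q.1 * w₂ p.2 q.2, fun p q => ?_, fun p => ?_, fun q => ?_,
    fun p q hw => ?_⟩
  · exact ⟨mul_nonneg (hb₁ _ _).1 (hb₂ _ _).1,
      mul_le_one₀ (hb₁ _ _).2 (hb₂ _ _).1 (hb₂ _ _).2⟩
  · simp only [PDist.prod, Fintype.sum_prod_type, ← Finset.mul_sum, ← Finset.sum_mul, hl₁, hl₂]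
  · simp only [PDist.prod, Fintype.sum_prod_type, ← Finset.mul_sum, ← Finset.sum_mul, hr₁, hr₂]
  · exact ⟨hp₁ _ _ (pos_of_mul_pos_left hw (hb₂ _ _).1),
      hp₂ _ _ (pos_of_mul_pos_right hw (hb₁ _ _).1)⟩

/-- Couplings compose by gluing along the middle marginal:
`w s₁ s₃ = ∑ s₂, w₁ s₁ s₂ * w₂ s₂ s₃ / μ₂ s₂`. Where `μ₂ s₂ = 0` both weights through `s₂`
vanish, so the junk value `x / 0 = 0` is harmless. -/
lemma trans {R₁ : S₁ → S₂ → Prop} {R₂ : S₂ → S₃ → Prop}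
    {μ₁ : PDist S₁} {μ₂ : PDist S₂} {μ₃ : PDist S₃}
    (h₁ : DistLe R₁ μ₁ μ₂) (h₂ : DistLe R₂ μ₂ μ₃) :
    DistLe (fun s₁ s₃ => ∃ s₂, R₁ s₁ s₂ ∧ R₂ s₂ s₃) μ₁ μ₃ := by
  obtain ⟨w₁, hb₁, hl₁, hr₁, hp₁⟩ := h₁
  obtain ⟨w₂, hb₂, hl₂, hr₂, hp₂⟩ := h₂
  have hw₁_le s₁ s₂ : w₁ s₁ s₂ ≤ μ₂.prob s₂ :=
    hr₁ s₂ ▸ Finset.single_le_sum (fun t _ => (hb₁ t s₂).1) (Finset.mem_univ s₁)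
  have hw₁_zero s₁ s₂ (h : μ₂.prob s₂ = 0) : w₁ s₁ s₂ = 0 :=
    le_antisymm (h ▸ hw₁_le s₁ s₂) (hb₁ s₁ s₂).1
  have hw₂_zero s₂ s₃ (h : μ₂.prob s₂ = 0) : w₂ s₂ s₃ = 0 :=
    le_antisymm (h ▸ hl₂ s₂ ▸ Finset.single_le_sum (fun t _ => (hb₂ s₂ t).1)
      (Finset.mem_univ s₃)) (hb₂ s₂ s₃).1
  set w : S₁ → S₃ → ℚ := fun s₁ s₃ => ∑ s₂, w₁ s₁ s₂ * w₂ s₂ s₃ / μ₂.prob s₂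
  have hterm_nonneg s₁ s₂ s₃ : 0 ≤ w₁ s₁ s₂ * w₂ s₂ s₃ / μ₂.prob s₂ :=
    div_nonneg (mul_nonneg (hb₁ _ _).1 (hb₂ _ _).1) (μ₂.nonneg _)
  have hw_le s₁ s₃ : w s₁ s₃ ≤ μ₃.prob s₃ := hr₂ s₃ ▸ Finset.sum_le_sum fun s₂ _ =>
    div_le_of_le_mul₀ (μ₂.nonneg _) (hb₂ _ _).1 <| by
      rw [mul_comm]; exact mul_le_mul_of_nonneg_left (hw₁_le _ _) (hb₂ _ _).1
  refine ⟨w, fun s₁ s₃ => ⟨Finset.sum_nonneg fun s₂ _ => hterm_nonneg s₁ s₂ s₃,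
    (hw_le s₁ s₃).trans (μ₃.prob_le_one s₃)⟩, fun s₁ => ?_, fun s₃ => ?_, fun s₁ s₃ hw => ?_⟩
  · rw [Finset.sum_comm, hl₁]
    refine Finset.sum_congr rfl fun s₂ _ => ?_
    rw [← Finset.sum_div, ← Finset.mul_sum, ← hl₂, mul_div_cancel_of_imp (hw₁_zero s₁ s₂)]
  · rw [Finset.sum_comm, hr₂]
    refine Finset.sum_congr rfl fun s₂ _ => ?_
    rw [← Finset.sum_div, ← Finset.sum_mul, ← hr₁, mul_comm,
      mul_div_cancel_of_imp (hw₂_zero s₂ s₃)]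
  · obtain ⟨s₂, -, hs₂⟩ := Finset.exists_ne_zero_of_sum_ne_zero hw.ne'
    obtain ⟨⟨hne₁, hne₂⟩, -⟩ := div_ne_zero_iff.mp hs₂ |>.imp_left mul_ne_zero_iff.mp
    exact ⟨s₂, hp₁ _ _ ((hb₁ _ _).1.lt_of_ne' hne₁), hp₂ _ _ ((hb₂ _ _).1.lt_of_ne' hne₂)⟩

end DistLe

namespace Sim

lemma refl {S A : Type} [Fintype S] (L : LPTS S A) : Sim L L :=
  ⟨Eq, fun _ _ hst _ μ ht => hst ▸ ⟨μ, ht, DistLe.refl μ⟩, rfl⟩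

lemma trans {S₁ S₂ S₃ A : Type} [Fintype S₁] [Fintype S₂] [Fintype S₃]
    {L₁ : LPTS S₁ A} {L₂ : LPTS S₂ A} {L₃ : LPTS S₃ A}
    (h₁ : Sim L₁ L₂) (h₂ : Sim L₂ L₃) : Sim L₁ L₃ := by
  obtain ⟨R₁, hs₁, hst₁⟩ := h₁
  obtain ⟨R₂, hs₂, hst₂⟩ := h₂
  refine ⟨fun s₁ s₃ => ∃ s₂, R₁ s₁ s₂ ∧ R₂ s₂ s₃, ?_, ⟨L₂.start, hst₁, hst₂⟩⟩
  rintro s₁ s₃ ⟨s₂, hr₁, hr₂⟩ a μ₁ ht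
  obtain ⟨μ₂, ht₂, hd₁⟩ := hs₁ s₁ s₂ hr₁ a μ₁ ht
  obtain ⟨μ₃, ht₃, hd₂⟩ := hs₂ s₂ s₃ hr₂ a μ₂ ht₂
  exact ⟨μ₃, ht₃, hd₁.trans hd₂⟩

lemma parComp_right {S₁ S₂ SA A : Type} [Fintype S₁] [Fintype S₂] [Fintype SA]
    (L₁ : LPTS S₁ A) {L₂ : LPTS S₂ A} {As : LPTS SA A}
    (halpha : As.alpha = L₂.alpha) (h : Sim L₂ As) :
    Sim (parComp L₁ L₂) (parComp L₁ As) := by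
  obtain ⟨R, hR, hstart⟩ := h
  refine ⟨fun p q => p.1 = q.1 ∧ R p.2 q.2, ?_, ⟨rfl, hstart⟩⟩
  rintro ⟨s₁, s₂⟩ ⟨t₁, t₂⟩ ⟨rfl : s₁ = t₁, hr⟩ a μ ht
  rcases ht with ⟨μ₁, μ₂, ht₁, ht₂, rfl⟩ | ⟨μ₁, ht₁, hna, rfl⟩ | ⟨μ₂, hna, ht₂, rfl⟩
  · obtain ⟨ν, htν, hd⟩ := hR s₂ t₂ hr a μ₂ ht₂
    exact ⟨μ₁.prod ν, Or.inl ⟨μ₁, ν, ht₁, htν, rfl⟩, (DistLe.refl μ₁).prod hd⟩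
  · exact ⟨μ₁.prod (PDist.dirac t₂), Or.inr (Or.inl ⟨μ₁, ht₁, halpha ▸ hna, rfl⟩),
      (DistLe.refl μ₁).prod (DistLe.dirac hr)⟩
  · obtain ⟨ν, htν, hd⟩ := hR s₂ t₂ hr a μ₂ ht₂
    exact ⟨(PDist.dirac s₁).prod ν, Or.inr (Or.inr ⟨ν, hna, htν, rfl⟩),
      (DistLe.refl _).prod hd⟩

end Sim

/-- Soundness and completeness of the assume-guarantee rule ASym:
`L₁ ∥ L₂ ⪯ P` iff there is an assumption `A` with the alphabet of `L₂` such that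
`L₁ ∥ A ⪯ P` and `L₂ ⪯ A`. -/
theorem asym_sound_complete {S₁ S₂ SP Act : Type}
    [Fintype S₁] [Fintype S₂] [Fintype SP]
    (L₁ : LPTS S₁ Act) (L₂ : LPTS S₂ Act) (P : LPTS SP Act) :
    Sim (parComp L₁ L₂) P ↔
      ∃ (SA : Type) (_ : Fintype SA) (As : LPTS SA Act),
        As.alpha = L₂.alpha ∧ Sim (parComp L₁ As) P ∧ Sim L₂ As := by
  constructor
  · intro h
    exact ⟨S₂, inferInstance, L₂, rfl, h, Sim.refl L₂⟩
  · rintro ⟨SA, _, As, halpha, hA, hL₂A⟩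
    exact (Sim.parComp_right L₁ halpha hL₂A).trans hA
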